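/- Let N, n be positive integers, X : Fin n → M_N(ℂ), let P be the monomial of the word ℓ : Fin k → Fin n and Q the monomial of the word ℓ′ : Fin k′ → Fin n, let i, j ∈ Fin n and a, b, c, d ∈ Fin N. For s, t ∈ ℂ let X^{s,t} be the n-tuple obtained from X by adding s·E(d,a) to X_j and t·E(b,c) to X_i (both additions to the same matrix if i = j), and set G(s,t) = Tr P(X^{s,t}) · Tr Q(X^{s,t}). Then ∂²G/∂s∂t(0,0) = Tr Q(X) · H_P + Tr P(X) · H_Q + [(𝒟^{x_i}P)(X)]_{cb}·[(𝒟^{x_j}Q)(X)]_{ad} + [(𝒟^{x_i}Q)(X)]_{cb}·[(𝒟^{x_j}P)(X)]_{ad}, where H_P (respectively H_Q) is the mixed second partial derivative at (0,0) of (s,t) ↦ Tr P(X^{s,t}) (respectively (s,t) ↦ Tr Q(X^{s,t})), and 𝒟^{x_i} denotes the cyclic derivative: 𝒟^{x_i}P = Σ_{r : ℓ(r)=i} X_{ℓ(r+1)} ⋯ X_{ℓ(k−1)} X_{ℓ(0)} ⋯ X_{ℓ(r−1)}. (This is the Leibniz rule for the noncommutative Hessian of a product of traces, with the Δ(P,Q)-term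 given by twisted tensor products of cyclic gradients.) -/

import Mathlib

open Matrix

/-- The mixed second partial derivative `∂²G/∂s∂t` at `(0,0)` of `G : ℂ × ℂ → ℂ`
(written curried, first argument `s`, second argument `t`). -/
noncomputable def mixedDeriv (G : ℂ → ℂ → ℂ) : ℂ :=
  deriv (fun t : ℂ => deriv (fun s : ℂ => G s t) 0) 0

/-- The monomial `Q(X) = X_{ℓ(0)} X_{ℓ(1)} ⋯ X_{ℓ(k−1)}` (ordered product, empty = `1`). -/
noncomputable def wordProd {N n k : ℕ} (X : Fin n → Matrix (Fin N) (Fin N) ℂ)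
    (ℓ : Fin k → Fin n) : Matrix (Fin N) (Fin N) ℂ :=
  ((List.finRange k).map (fun r => X (ℓ r))).prod

/-- Voiculescu's cyclic derivative of the monomial of `ℓ` with respect to `x_i`, evaluated at
`X`: `𝒟^{x_i}Q = Σ_{r : ℓ(r)=i} X_{ℓ(r+1)} ⋯ X_{ℓ(k−1)} X_{ℓ(0)} ⋯ X_{ℓ(r−1)}`. -/
noncomputable def cycDeriv {N n k : ℕ} (X : Fin n → Matrix (Fin N) (Fin N) ℂ)
    (ℓ : Fin k → Fin n) (i : Fin n) : Matrix (Fin N) (Fin N) ℂ :=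
  ∑ r ∈ Finset.univ.filter (fun r : Fin k => ℓ r = i),
    (((List.finRange k).filter (fun s => r < s)).map (fun s => X (ℓ s))).prod *
      (((List.finRange k).filter (fun s => s < r)).map (fun s => X (ℓ s))).prod

/-- The perturbed tuple `X^{s,t}`: add `s·E(d,a)` to `X_j` and `t·E(b,c)` to `X_i`. -/
noncomputable def perturb {N n : ℕ} (X : Fin n → Matrix (Fin N) (Fin N) ℂ)
    (j i : Fin n) (d a b c : Fin N) (s t : ℂ) : Fin n → Matrix (Fin N) (Fin N) ℂ :=
  fun p => X p + (if p = j then s • Matrix.single d a (1 : ℂ) else 0) +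
    (if p = i then t • Matrix.single b c (1 : ℂ) else 0)

/-!
Both factors are traces of words in matrices that depend affinely on `s` and `t`, so the
ordinary Leibniz rule applies twice: the mixed derivative of `Tr P · Tr Q` is
`Tr Q · H_P + Tr P · H_Q` plus the two cross terms `∂ₜ Tr P · ∂ₛ Tr Q + ∂ₜ Tr Q · ∂ₛ Tr P`.
Differentiating a word in the direction `E` at one letter `x_i` gives a sum of words with that
letter replaced by `E`; cycling the trace moves `E` to the front, so the derivative is
`Tr (E · 𝒟^{x_i} P)`, which for `E = E(b,c)` is the entry `(𝒟^{x_i} P)_{cb}`.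
-/

namespace List

theorem filter_finRange_lt {k : ℕ} (r : Fin k) :
    (finRange k).filter (· < r) = (finRange k).take r := by
  conv_lhs => rw [← take_append_drop r (finRange k)]
  rw [filter_append, filter_eq_self.2, filter_eq_nil_iff.2, append_nil]
  · intro x hx
    obtain ⟨m, hm, rfl⟩ := mem_drop_iff_getElem.1 hx
    simp [Fin.lt_def]
  · intro x hx
    obtain ⟨m, hm, rfl⟩ := mem_take_iff_getElem.1 hx
    simp only [getElem_finRange, Fin.cast_mk, decide_eq_true_eq, Fin.lt_def]
    omega

theorem filter_finRange_gt {k : ℕ} (r : Fin k) :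
    (finRange k).filter (r < ·) = (finRange k).drop (r + 1) := by
  conv_lhs => rw [← take_append_drop (r + 1) (finRange k)]
  rw [filter_append, filter_eq_nil_iff.2, nil_append, filter_eq_self.2]
  · intro x hx
    obtain ⟨m, hm, rfl⟩ := mem_drop_iff_getElem.1 hx
    simp only [getElem_finRange, Fin.cast_mk, decide_eq_true_eq, Fin.lt_def]
    omega
  · intro x hx
    obtain ⟨m, hm, rfl⟩ := mem_take_iff_getElem.1 hx
    simp only [getElem_finRange, Fin.cast_mk, decide_eq_true_eq, Fin.lt_def]
    omega

end List

theorem Differentiable.list_prod_map {𝕜 E 𝔸 ι : Type*} [NontriviallyNormedField 𝕜]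
    [NormedAddCommGroup E] [NormedSpace 𝕜 E] [NormedRing 𝔸] [NormedAlgebra 𝕜 𝔸]
    (l : List ι) {f : ι → E → 𝔸} (h : ∀ i ∈ l, Differentiable 𝕜 (f i)) :
    Differentiable 𝕜 fun x => (l.map (f · x)).prod := fun x =>
  (HasFDerivAt.list_prod' fun i hi => (h i hi x).hasFDerivAt).differentiableAt

theorem mixedDeriv_mul {F H : ℂ → ℂ → ℂ} {F₁ H₁ : ℂ → ℂ} {F₂ H₂ : ℂ}
    (hF₁ : ∀ t, HasDerivAt (fun s => F s t) (F₁ t) 0)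
    (hH₁ : ∀ t, HasDerivAt (fun s => H s t) (H₁ t) 0)
    (hF₁' : DifferentiableAt ℂ F₁ 0) (hH₁' : DifferentiableAt ℂ H₁ 0)
    (hF₂ : HasDerivAt (fun t => F 0 t) F₂ 0) (hH₂ : HasDerivAt (fun t => H 0 t) H₂ 0) :
    mixedDeriv (fun s t => F s t * H s t) =
      H 0 0 * mixedDeriv F + F 0 0 * mixedDeriv H + F₂ * H₁ 0 + H₂ * F₁ 0 := by
  have hF : mixedDeriv F = deriv F₁ 0 := congrArg (deriv · 0) (funext fun t => (hF₁ t).deriv)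
  have hH : mixedDeriv H = deriv H₁ 0 := congrArg (deriv · 0) (funext fun t => (hH₁ t).deriv)
  have hinner : (fun t => deriv (fun s => F s t * H s t) 0) =
      fun t => F₁ t * H 0 t + F 0 t * H₁ t :=
    funext fun t => ((hF₁ t).mul (hH₁ t)).deriv
  have hsum := (hF₁'.hasDerivAt.fun_mul hH₂).fun_add (hF₂.fun_mul hH₁'.hasDerivAt)
  rw [mixedDeriv, hinner, hsum.deriv, hF, hH]
  ring

section WordDerivative

attribute [local instance] Matrix.linftyOpNormedAddCommGroup Matrix.linftyOpNormedRing
  Matrix.linftyOpNormedAlgebra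

variable {N n k : ℕ}

theorem hasDerivAt_trace_wordProd_add_single (Y : Fin n → Matrix (Fin N) (Fin N) ℂ)
    (ℓ : Fin k → Fin n) (j : Fin n) (E : Matrix (Fin N) (Fin N) ℂ) :
    HasDerivAt (fun s : ℂ => (wordProd (Y + Pi.single j (s • E)) ℓ).trace)
      (E * cycDeriv Y ℓ j).trace 0 := by
  classical
  let V : Fin k → Matrix (Fin N) (Fin N) ℂ := (Pi.single j E : Fin n → _) ∘ ℓ
  have hγ := ((hasDerivAt_id (0 : ℂ)).smul_const V).const_add (Y ∘ ℓ)
  simp only [id, one_smul] at hγ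
  have h := (traceLinearMap (Fin N) ℂ ℂ).toContinuousLinearMap.hasFDerivAt.comp_hasDerivAt 0 <|
    (hasFDerivAt_list_prod_finRange' (𝕜 := ℂ)).comp_hasDerivAt 0 hγ
  refine (h.congr_deriv ?_).congr_of_eventuallyEq (.of_forall fun s => ?_)
  · -- `show` unfolds the trace functional, whose domain carries the default matrix instances
    -- rather than the local operator-norm ones, so `simp` cannot see through it
    show Matrix.trace (n := Fin N) (R := ℂ) _ = _
    simp only [Function.comp_def, Pi.single_apply, zero_smul, add_zero, List.map_take,
      List.map_drop, _root_.sum_apply, _root_.smul_apply, ContinuousLinearMap.proj_apply, smul_ite,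
      MulOpposite.smul_eq_mul_unop, MulOpposite.unop_op, smul_zero, smul_eq_mul, mul_ite,
      mul_zero, cycDeriv, List.filter_finRange_gt, List.filter_finRange_lt, Finset.sum_filter,
      Matrix.mul_sum, trace_sum, V]
    refine Finset.sum_congr rfl fun r _ => ?_
    split_ifs
    · rw [trace_mul_comm, mul_assoc, Nat.succ_eq_add_one]
    · rfl
  · show Matrix.trace (n := Fin N) (R := ℂ) _ = Matrix.trace (n := Fin N) (R := ℂ) _
    simp only [wordProd, Pi.add_apply, Pi.single_smul, Pi.smul_apply]
    rfl

theorem differentiable_cycDeriv {Y : ℂ → Fin n → Matrix (Fin N) (Fin N) ℂ}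
    (hY : ∀ p, Differentiable ℂ (Y · p)) (ℓ : Fin k → Fin n) (j : Fin n) :
    Differentiable ℂ fun t => cycDeriv (Y t) ℓ j :=
  Differentiable.fun_sum fun _ _ =>
    (Differentiable.list_prod_map _ fun s _ => hY (ℓ s)).mul
      (Differentiable.list_prod_map _ fun s _ => hY (ℓ s))

theorem differentiable_trace_mul_cycDeriv_add_single (Y : Fin n → Matrix (Fin N) (Fin N) ℂ)
    (ℓ : Fin k → Fin n) (i j : Fin n) (E E' : Matrix (Fin N) (Fin N) ℂ) :
    Differentiable ℂ fun t : ℂ => (E * cycDeriv (Y + Pi.single i (t • E')) ℓ j).trace := by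
  have hY (p : Fin n) : Differentiable ℂ fun t : ℂ => (Y + Pi.single i (t • E') : Fin n → _) p := by
    simp only [Pi.add_apply, Pi.single_smul, Pi.smul_apply]
    exact (differentiable_id.smul_const _).const_add _
  exact (traceLinearMap (Fin N) ℂ ℂ).toContinuousLinearMap.differentiable.comp
    ((differentiable_cycDeriv hY ℓ j).const_mul E)

end WordDerivative

section Perturb

variable {N n k : ℕ} (X : Fin n → Matrix (Fin N) (Fin N) ℂ) (ℓ : Fin k → Fin n) (i j : Fin n)
  (a b c d : Fin N)

theorem perturb_eq (s t : ℂ) :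
    perturb X j i d a b c s t =
      X + Pi.single i (t • single b c 1) + Pi.single j (s • single d a 1) := by
  ext1 p
  simp only [perturb, Pi.add_apply, Pi.single_apply]
  abel

theorem hasDerivAt_trace_wordProd_perturb_fst (t : ℂ) :
    HasDerivAt (fun s => (wordProd (perturb X j i d a b c s t) ℓ).trace)
      (single d a 1 * cycDeriv (X + Pi.single i (t • single b c 1)) ℓ j).trace 0 := by
  simpa only [perturb_eq] using hasDerivAt_trace_wordProd_add_single _ ℓ j _

theorem hasDerivAt_trace_wordProd_perturb_snd :
    HasDerivAt (fun t => (wordProd (perturb X j i d a b c 0 t) ℓ).trace)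
      (cycDeriv X ℓ i c b) 0 := by
  simpa only [perturb_eq, zero_smul, Pi.single_zero, add_zero, trace_single_mul, one_smul]
    using hasDerivAt_trace_wordProd_add_single X ℓ i (single b c 1)

end Perturb

theorem stmt3_general (N n k k' : ℕ)
    (X : Fin n → Matrix (Fin N) (Fin N) ℂ)
    (ℓ : Fin k → Fin n) (ℓ' : Fin k' → Fin n)
    (i j : Fin n) (a b c d : Fin N) :
    mixedDeriv (fun s t =>
        Matrix.trace (wordProd (perturb X j i d a b c s t) ℓ) *
          Matrix.trace (wordProd (perturb X j i d a b c s t) ℓ')) =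
      Matrix.trace (wordProd X ℓ') *
          mixedDeriv (fun s t => Matrix.trace (wordProd (perturb X j i d a b c s t) ℓ)) +
        Matrix.trace (wordProd X ℓ) *
          mixedDeriv (fun s t => Matrix.trace (wordProd (perturb X j i d a b c s t) ℓ')) +
        (cycDeriv X ℓ i) c b * (cycDeriv X ℓ' j) a d +
        (cycDeriv X ℓ' i) c b * (cycDeriv X ℓ j) a d := by
  rw [mixedDeriv_mul (hasDerivAt_trace_wordProd_perturb_fst X ℓ i j a b c d)
    (hasDerivAt_trace_wordProd_perturb_fst X ℓ' i j a b c d)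
    (differentiable_trace_mul_cycDeriv_add_single X ℓ i j _ _ 0)
    (differentiable_trace_mul_cycDeriv_add_single X ℓ' i j _ _ 0)
    (hasDerivAt_trace_wordProd_perturb_snd X ℓ i j a b c d)
    (hasDerivAt_trace_wordProd_perturb_snd X ℓ' i j a b c d)]
  simp only [perturb_eq, zero_smul, Pi.single_zero, add_zero, trace_single_mul, one_smul]

/-- Leibniz rule for the noncommutative Hessian of a product of traces, with
the `Δ(P,Q)`-term given by twisted tensor products of cyclic gradients. -/
theorem stmt3 (N n k k' : ℕ) (hN : 0 < N) (hn : 0 < n)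
    (X : Fin n → Matrix (Fin N) (Fin N) ℂ)
    (ℓ : Fin k → Fin n) (ℓ' : Fin k' → Fin n)
    (i j : Fin n) (a b c d : Fin N) :
    mixedDeriv (fun s t =>
        Matrix.trace (wordProd (perturb X j i d a b c s t) ℓ) *
          Matrix.trace (wordProd (perturb X j i d a b c s t) ℓ')) =
      Matrix.trace (wordProd X ℓ') *
          mixedDeriv (fun s t => Matrix.trace (wordProd (perturb X j i d a b c s t) ℓ)) +
        Matrix.trace (wordProd X ℓ) *
          mixedDeriv (fun s t => Matrix.trace (wordProd (perturb X j i d a b c s t) ℓ')) +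
        (cycDeriv X ℓ i) c b * (cycDeriv X ℓ' j) a d +
        (cycDeriv X ℓ' i) c b * (cycDeriv X ℓ j) a d :=
  stmt3_general N n k k' X ℓ ℓ' i j a b c d
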